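/- arXiv:2604.01314 — 3 statements merged into one kernel-verified Lean document; each statement's English description precedes it below -/
import Mathlib

section
/- If there exist nonnegative integers j, p, q, J, P, Q with j > 0 and J > 0 such that j·a = p·b + q·c and J·b = P·a + Q·c for positive reals a, b, c, then a/b is rational. -/
lemma stmt_0_aux (a b : ℝ) (hb : 0 < b) (m n : ℕ) (hm : 0 < m)
    (h : (m : ℝ) * a = n * b) : ∃ r : ℚ, a / b = r := by
  refine ⟨(n : ℚ) / (m : ℚ), ?_⟩
  have hm' : (m : ℝ) ≠ 0 := by positivity
  push_cast
  field_simp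
  linarith

/-- If there exist nonnegative integers j, p, q, J, P, Q with j > 0 and J > 0 such that
j·a = p·b + q·c and J·b = P·a + Q·c for positive reals a, b, c, then a/b is rational. -/
theorem stmt_0 (a b c : ℝ) (ha : 0 < a) (hb : 0 < b) (hc : 0 < c)
    (h : ∃ j p q J P Q : ℕ, 0 < j ∧ 0 < J ∧
      (j : ℝ) * a = p * b + q * c ∧ (J : ℝ) * b = P * a + Q * c) :
    ∃ r : ℚ, a / b = r := by
  obtain ⟨j, p, q, J, P, Q, hj, hJ, h1, h2⟩ := h
  rcases Nat.eq_zero_or_pos q with hq | hq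
  · subst hq
    exact stmt_0_aux a b hb j p hj (by push_cast at h1 ⊢; linarith)
  rcases Nat.eq_zero_or_pos Q with hQ | hQ
  · subst hQ
    have hP : 0 < P := by
      rcases Nat.eq_zero_or_pos P with h0 | h0
      · exfalso; subst h0
        have : (J : ℝ) * b > 0 := by positivity
        simp at h2
        rcases h2 with h2 | h2
        exacts [absurd h2 hJ.ne', absurd h2 hb.ne']
      · exact h0
    exact stmt_0_aux a b hb P J hP (by push_cast at h2 ⊢; linarith)
  · refine stmt_0_aux a b hb (Q * j + q * P) (Q * p + q * J) ?_ ?_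
    · positivity
    · have hQ' : (0:ℝ) ≤ (Q:ℝ) := by positivity
      have hq' : (0:ℝ) ≤ (q:ℝ) := by positivity
      push_cast
      nlinarith [mul_le_mul_of_nonneg_left h1.le hQ', mul_le_mul_of_nonneg_left h1.ge hQ',
        mul_le_mul_of_nonneg_left h2.le hq', mul_le_mul_of_nonneg_left h2.ge hq']
end

section
/- Suppose positive reals a, b, c satisfy an a-relation j·a = p·b + q·c (j > 0), a b-relation m·b = u·a + v·c (m > 0), and a c-relation k·c = r·a + s·b (k > 0), with all coefficients nonnegative integers. Then all three ratios a/b, b/c, a/c are rational. -/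
/-- If m*x = n*y with m > 0 and y > 0, then x/y is rational. -/
lemma stmt2_aux (x y : ℝ) (hy : 0 < y) (m n : ℕ) (hm : 0 < m)
    (h : (m : ℝ) * x = (n : ℝ) * y) : ∃ t : ℚ, x / y = t := by
  refine ⟨(n : ℚ) / (m : ℚ), ?_⟩
  have hm' : (m : ℝ) ≠ 0 := Nat.cast_ne_zero.mpr hm.ne'
  push_cast
  rw [div_eq_div_iff hy.ne' hm']
  linarith

lemma stmt2_pos (x y : ℝ) (hx : 0 < x) (hy : 0 < y) (m n : ℕ) (hm : 0 < m)
    (h : (m : ℝ) * x = (n : ℝ) * y) : 0 < n := by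
  rcases Nat.eq_zero_or_pos n with h0 | h0
  · exfalso
    subst h0
    rw [Nat.cast_zero, zero_mul] at h
    have hm' : (0 : ℝ) < (m : ℝ) := by exact_mod_cast hm
    nlinarith [mul_pos hm' hx]
  · exact h0

/-- Suppose positive reals a, b, c satisfy an a-relation, a b-relation, and a c-relation,
with all coefficients nonnegative integers and leading coefficients positive.
Then all three ratios a/b, b/c, a/c are rational. -/
theorem stmt_2 (a b c : ℝ) (ha : 0 < a) (hb : 0 < b) (hc : 0 < c)
    (j p q : ℕ) (hj : 0 < j) (h1 : (j : ℝ) * a = p * b + q * c)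
    (J P Q : ℕ) (hJ : 0 < J) (h2 : (J : ℝ) * b = P * a + Q * c)
    (k r s : ℕ) (hk : 0 < k) (h3 : (k : ℝ) * c = r * a + s * b) :
    (∃ x : ℚ, a / b = x) ∧ (∃ y : ℚ, b / c = y) ∧ (∃ z : ℚ, a / c = z) := by
  have key : ((j * k : ℕ) : ℝ) * a = ((p * k + q * s : ℕ) : ℝ) * b + ((q * r : ℕ) : ℝ) * a := by
    push_cast
    linear_combination (k : ℝ) * h1 + (q : ℝ) * h3
  rcases lt_or_ge (q * r) (j * k) with hlt | hge
  · -- non-degenerate case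
    set d := j * k - q * r with hd
    have hdpos : 0 < d := Nat.sub_pos_of_lt hlt
    set e := p * k + q * s with he
    have hab : (d : ℝ) * a = (e : ℝ) * b := by
      have hcast : ((j * k : ℕ) : ℝ) = (d : ℝ) + ((q * r : ℕ) : ℝ) := by
        rw [hd]; push_cast [Nat.cast_sub hlt.le]; ring
      rw [hcast] at key; linarith
    have hepos : 0 < e := stmt2_pos a b ha hb d e hdpos hab
    have hbc : ((r * e + s * d : ℕ) : ℝ) * b = ((k * d : ℕ) : ℝ) * c := by
      push_cast
      linear_combination (-(r : ℝ)) * hab - (d : ℝ) * h3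
    have hnpos : 0 < r * e + s * d :=
      stmt2_pos c b hc hb (k * d) (r * e + s * d) (Nat.mul_pos hk hdpos) hbc.symm
    have hac : (((r * e + s * d) * d : ℕ) : ℝ) * a = ((e * (k * d) : ℕ) : ℝ) * c := by
      push_cast
      push_cast at hbc
      linear_combination ((r : ℝ) * e + (s : ℝ) * d) * hab + (e : ℝ) * hbc
    exact ⟨stmt2_aux a b hb d e hdpos hab,
      stmt2_aux b c hc (r * e + s * d) (k * d) hnpos hbc,
      stmt2_aux a c hc ((r * e + s * d) * d) (e * (k * d)) (Nat.mul_pos hnpos hdpos) hac⟩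
  · -- degenerate case: j*k ≤ q*r forces j*k = q*r and p*k+q*s = 0
    have heq : j * k = q * r := by
      rcases lt_or_eq_of_le hge with hlt | heq
      · exfalso
        have hle : ((q * r : ℕ) : ℝ) * a ≤ ((j * k : ℕ) : ℝ) * a := by
          nlinarith [mul_nonneg (Nat.cast_nonneg (p * k + q * s) : (0:ℝ) ≤ _) hb.le]
        have hlt' : ((j * k : ℕ) : ℝ) < ((q * r : ℕ) : ℝ) := by exact_mod_cast hlt
        nlinarith
      · exact heq
    have he0 : ((p * k + q * s : ℕ) : ℝ) * b = 0 := by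
      have hcast : ((j * k : ℕ) : ℝ) = ((q * r : ℕ) : ℝ) := by exact_mod_cast heq
      nlinarith [key]
    have he0' : p * k + q * s = 0 := by
      by_contra hne
      have hpos : (0 : ℝ) < ((p * k + q * s : ℕ) : ℝ) :=
        Nat.cast_pos.mpr (Nat.pos_of_ne_zero hne)
      nlinarith
    have hq : 0 < q := by
      rcases Nat.eq_zero_or_pos q with h0 | h0
      · exfalso; rw [h0, zero_mul] at heq; exact (Nat.mul_pos hj hk).ne' heq
      · exact h0
    have hr : 0 < r := by
      rcases Nat.eq_zero_or_pos r with h0 | h0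
      · exfalso; rw [h0, mul_zero] at heq; exact (Nat.mul_pos hj hk).ne' heq
      · exact h0
    have hqs : q * s = 0 := Nat.eq_zero_of_add_eq_zero_left he0'
    have hs : s = 0 := (Nat.mul_eq_zero.mp hqs).resolve_left hq.ne'
    have h3' : (r : ℝ) * a = (k : ℝ) * c := by
      rw [hs] at h3; push_cast at h3; linarith
    have hbc : ((r * J : ℕ) : ℝ) * b = ((P * k + Q * r : ℕ) : ℝ) * c := by
      push_cast
      linear_combination (r : ℝ) * h2 + (P : ℝ) * h3'
    have hn2 : 0 < P * k + Q * r :=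
      stmt2_pos b c hb hc (r * J) (P * k + Q * r) (Nat.mul_pos hr hJ) hbc
    have hab : (((P * k + Q * r) * r : ℕ) : ℝ) * a = ((k * (r * J) : ℕ) : ℝ) * b := by
      push_cast
      push_cast at hbc
      linear_combination ((P : ℝ) * k + (Q : ℝ) * r) * h3' - (k : ℝ) * hbc
    exact ⟨stmt2_aux a b hb ((P * k + Q * r) * r) (k * (r * J)) (Nat.mul_pos hn2 hr) hab,
      stmt2_aux b c hc (r * J) (P * k + Q * r) (Nat.mul_pos hr hJ) hbc,
      stmt2_aux a c hc r k hr h3'⟩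
end

section
/- Suppose α, β, γ are the angles of a triangle with γ = 2π/3 and α/π irrational. If nonnegative integers m, n, p satisfy m·α + n·β + p·γ = 2π, then (m,n,p) is one of (0,0,3), (6,6,0), (4,4,1), (2,2,2). -/
open Real

/-- If α, β, γ are triangle angles with γ = 2π/3 and α/π irrational, and
m·α + n·β + p·γ = 2π with m,n,p nonnegative integers, then
(m,n,p) ∈ {(0,0,3), (6,6,0), (4,4,1), (2,2,2)}. -/
theorem stmt_7 (α β γ : ℝ) (hα : 0 < α) (hβ : 0 < β)
    (hsum : α + β + γ = π) (hγ : γ = 2 * π / 3) (hirr : Irrational (α / π))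
    (m n p : ℕ) (h : (m : ℝ) * α + n * β + p * γ = 2 * π) :
    (m, n, p) = (0, 0, 3) ∨ (m, n, p) = (6, 6, 0) ∨
    (m, n, p) = (4, 4, 1) ∨ (m, n, p) = (2, 2, 2) := by
  have hπ : (0:ℝ) < π := Real.pi_pos
  have hβ' : β = π / 3 - α := by rw [hγ] at hsum; linarith
  subst hγ hβ'
  -- equation: (m - n) * α = ((6 - n - 2p)/3) * π
  have key : ((m:ℝ) - n) * α = ((6 - (n:ℝ) - 2 * p) / 3) * π := by ring_nf; ring_nf at h; linarith
  have hmn : m = n := by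
    by_contra hne
    have hne' : ((m:ℝ) - n) ≠ 0 := by
      intro hz
      apply hne
      exact_mod_cast sub_eq_zero.mp hz
    apply hirr
    refine ⟨((6 - (n:ℚ) - 2 * p) / 3) / ((m:ℚ) - n), ?_⟩
    have : α / π = (((6 - (n:ℝ) - 2 * p) / 3) / ((m:ℝ) - n)) := by
      field_simp at key ⊢
      linarith [key]
    rw [this]
    push_cast
    ring
  subst hmn
  have key2 : ((6:ℝ) - m - 2 * p) = 0 := by
    have : ((6 - (m:ℝ) - 2 * p) / 3) * π = 0 := by rw [← key]; ring
    rcases mul_eq_zero.mp this with h1 | h1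
    · linarith
    · exact absurd h1 hπ.ne'
  have h6 : m + 2 * p = 6 := by
    have : (m:ℝ) + 2 * p = 6 := by linarith
    exact_mod_cast this
  simp only [Prod.mk.injEq]
  omega
end
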